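/- arXiv:1403.7164 — 7 statements merged into one kernel-verified Lean document; each statement's English description precedes it below -/
import Mathlib

section
/- For any two probability distributions P and Q on a finite set, the Chernoff information C(P,Q) = -min_{λ∈[0,1]} log(Σₓ P(x)^λ Q(x)^{1-λ}) satisfies C(P,Q) ≥ -(1/2) log(1 - d_TV(P,Q)²), provided d_TV(P,Q) < 1. -/
/-!
At `λ = 1/2` the Chernoff sum is the Bhattacharyya coefficient `B = ∑ √P √Q`. Writing
`|P - Q| = |√P - √Q| (√P + √Q)`, Cauchy–Schwarz gives `(2ε)² ≤ (2 - 2B)(2 + 2B)`, i.e.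
`B² ≤ 1 - ε²`. The infimum over `λ` is not a junk value: every `P^λ Q^(1-λ)` dominates
`min P Q`, whose sum is `1 - ε > 0`, so the logarithms are bounded below.
-/

open Finset Real

theorem min_le_rpow_mul_rpow_one_sub {a b l : ℝ} (ha : 0 ≤ a) (hb : 0 ≤ b)
    (hl : l ∈ Set.Icc (0 : ℝ) 1) : min a b ≤ a ^ l * b ^ (1 - l) := by
  have hm : 0 ≤ min a b := le_min ha hb
  calc min a b = min a b ^ l * min a b ^ (1 - l) := by
        rw [← rpow_add' hm (by norm_num), add_sub_cancel, rpow_one]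
    _ ≤ a ^ l * b ^ (1 - l) := by
        gcongr
        · exact hl.1
        · exact min_le_left a b
        · linarith [hl.2]
        · exact min_le_right a b

section Sums

variable {α : Type*} (s : Finset α) {P Q : α → ℝ}

theorem sum_add_sum_sub_sum_abs_sub_le_two_mul_sum_rpow_mul_rpow (hP : ∀ x, 0 ≤ P x)
    (hQ : ∀ x, 0 ≤ Q x) {l : ℝ} (hl : l ∈ Set.Icc (0 : ℝ) 1) :
    ∑ x ∈ s, P x + ∑ x ∈ s, Q x - ∑ x ∈ s, |P x - Q x|
      ≤ 2 * ∑ x ∈ s, P x ^ l * Q x ^ (1 - l) := by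
  rw [← sum_add_distrib, ← sum_sub_distrib, mul_sum]
  refine sum_le_sum fun x _ => ?_
  have hmin : 2 • min (P x) (Q x) = P x + Q x - |Q x - P x| :=
    two_nsmul_inf_eq_add_sub_abs_sub _ _
  rw [abs_sub_comm, ← hmin, two_nsmul, ← two_mul]
  gcongr
  exact min_le_rpow_mul_rpow_one_sub (hP x) (hQ x) hl

theorem sq_sum_abs_sub_add_four_mul_sq_sum_sqrt_mul_sqrt_le (hP : ∀ x, 0 ≤ P x)
    (hQ : ∀ x, 0 ≤ Q x) :
    (∑ x ∈ s, |P x - Q x|) ^ 2 + 4 * (∑ x ∈ s, √(P x) * √(Q x)) ^ 2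
      ≤ (∑ x ∈ s, P x + ∑ x ∈ s, Q x) ^ 2 := by
  have hfactor : ∀ x, |√(P x) - √(Q x)| * (√(P x) + √(Q x)) = |P x - Q x| := by
    intro x
    rw [← abs_of_nonneg (by positivity : 0 ≤ √(P x) + √(Q x)), ← abs_mul,
      mul_comm, ← sq_sub_sq, sq_sqrt (hP x), sq_sqrt (hQ x)]
  have hminus : ∑ x ∈ s, |√(P x) - √(Q x)| ^ 2
      = ∑ x ∈ s, P x + ∑ x ∈ s, Q x - 2 * ∑ x ∈ s, √(P x) * √(Q x) := by
    simp only [sq_abs, sub_sq, sq_sqrt (hP _), sq_sqrt (hQ _), sum_add_distrib,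
      sum_sub_distrib, mul_assoc, ← mul_sum]
    ring
  have hplus : ∑ x ∈ s, (√(P x) + √(Q x)) ^ 2
      = ∑ x ∈ s, P x + ∑ x ∈ s, Q x + 2 * ∑ x ∈ s, √(P x) * √(Q x) := by
    simp only [add_sq, sq_sqrt (hP _), sq_sqrt (hQ _), sum_add_distrib, mul_assoc, ← mul_sum]
    ring
  have hCS := sum_mul_sq_le_sq_mul_sq s (fun x => |√(P x) - √(Q x)|) (fun x => √(P x) + √(Q x))
  simp only [hfactor, hminus, hplus] at hCS
  linear_combination hCS

end Sums

theorem chernoff_information_lower_bound {α : Type*} [Fintype α] (P Q : α → ℝ)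
    (hP : ∀ x, 0 ≤ P x) (hQ : ∀ x, 0 ≤ Q x)
    (hPsum : ∑ x, P x = 1) (hQsum : ∑ x, Q x = 1)
    (ε : ℝ) (hε : ε = (1 / 2) * ∑ x, |P x - Q x|) (hε1 : ε < 1) :
    -sInf ((fun l : ℝ => Real.log (∑ x, P x ^ l * Q x ^ (1 - l))) '' Set.Icc 0 1)
      ≥ -(1 / 2) * Real.log (1 - ε ^ 2) := by
  set f : ℝ → ℝ := fun l => ∑ x, P x ^ l * Q x ^ (1 - l)
  have htv : ∑ x, |P x - Q x| = 2 * ε := by rw [hε]; ring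
  have hlower : ∀ l ∈ Set.Icc (0 : ℝ) 1, 1 - ε ≤ f l := fun l hl => by
    have := sum_add_sum_sub_sum_abs_sub_le_two_mul_sum_rpow_mul_rpow univ hP hQ hl
    rw [hPsum, hQsum, htv] at this
    linarith
  have hhalf_mem : (1 / 2 : ℝ) ∈ Set.Icc (0 : ℝ) 1 := by norm_num
  have hhalf : f (1 / 2) = ∑ x, √(P x) * √(Q x) := by
    norm_num [f, sqrt_eq_rpow]
  have hpos : 0 < f (1 / 2) := (sub_pos.2 hε1).trans_le (hlower _ hhalf_mem)
  have hsq : f (1 / 2) ^ 2 ≤ 1 - ε ^ 2 := by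
    have := sq_sum_abs_sub_add_four_mul_sq_sum_sqrt_mul_sqrt_le univ hP hQ
    rw [hPsum, hQsum, htv, ← hhalf] at this
    linarith
  have hbdd : BddBelow ((fun l => log (f l)) '' Set.Icc 0 1) := by
    refine ⟨log (1 - ε), ?_⟩
    rintro _ ⟨l, hl, rfl⟩
    exact log_le_log (sub_pos.2 hε1) (hlower l hl)
  calc -sInf ((fun l => log (f l)) '' Set.Icc 0 1)
      ≥ -log (f (1 / 2)) := neg_le_neg (csInf_le hbdd ⟨_, hhalf_mem, rfl⟩)
    _ = -(1 / 2) * log (f (1 / 2) ^ 2) := by rw [log_pow]; ring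
    _ ≥ -(1 / 2) * log (1 - ε ^ 2) := by
      have := log_le_log (pow_pos hpos 2) hsq
      linarith
end

section
/- For any two probability distributions P and Q on a finite set, the capacitory discrimination C̄(P,Q) = D(P‖(P+Q)/2) + D(Q‖(P+Q)/2) satisfies C̄(P,Q) ≥ 2·d((1-ε)/2 ‖ 1/2), where ε = d_TV(P,Q) and d(p‖q) = p·log(p/q) + (1-p)·log((1-p)/(1-q)) is the binary relative entropy. -/
/-!
Each pair of summands is `(P x + Q x) * d(P x / (P x + Q x) ‖ 1/2)`, and
`d(p ‖ 1/2) = log 2 - h p` with `h` the binary entropy. Since `h` is symmetric about `1/2` we may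
replace `P x / (P x + Q x)` by `min (P x) (Q x) / (P x + Q x)`. Concavity of `h` makes its
perspective `(w, m) ↦ w * h (m / w)` superadditive; the masses `P x + Q x` add up to `2` and the
overlaps `min (P x) (Q x)` to `1 - ε`, which gives the bound `2 * (log 2 - h ((1 - ε) / 2))`.
-/

open Real Finset

noncomputable def binaryRelEntropy (p q : ℝ) : ℝ :=
  p * log (p / q) + (1 - p) * log ((1 - p) / (1 - q))

lemma binaryRelEntropy_half (p : ℝ) : binaryRelEntropy p (1 / 2) = log 2 - binEntropy p := by
  rcases eq_or_ne p 0 with rfl | hp₀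
  · norm_num [binaryRelEntropy]
  rcases eq_or_ne p 1 with rfl | hp₁
  · norm_num [binaryRelEntropy]
  rw [binaryRelEntropy, binEntropy, show p / (1 / 2) = 2 * p by ring,
    show (1 - p) / (1 - 1 / 2) = 2 * (1 - p) by ring, log_mul two_ne_zero hp₀,
    log_mul two_ne_zero (sub_ne_zero.2 hp₁.symm), log_inv, log_inv]
  ring

lemma mul_log_div_midpoint_add (a b : ℝ) :
    a * log (a / ((a + b) / 2)) + b * log (b / ((a + b) / 2))
      = (a + b) * binaryRelEntropy (a / (a + b)) (1 / 2) := by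
  rcases eq_or_ne (a + b) 0 with h | h
  · simp [h]
  rw [binaryRelEntropy, show 1 - a / (a + b) = b / (a + b) by field_simp; ring,
    show a / (a + b) / (1 / 2) = a / ((a + b) / 2) by field_simp,
    show b / (a + b) / (1 - 1 / 2) = b / ((a + b) / 2) by field_simp; ring]
  field_simp

lemma binEntropy_div_add_eq_min (a b : ℝ) :
    binEntropy (a / (a + b)) = binEntropy (min a b / (a + b)) := by
  rcases le_total a b with h | h
  · rw [min_eq_left h]
  rcases eq_or_ne (a + b) 0 with hab | hab
  · simp [hab]
  rw [min_eq_right h, ← binEntropy_one_sub, one_sub_div hab, add_sub_cancel_left]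

lemma ConcaveOn.sum_perspective_le {ι : Type*} {f : ℝ → ℝ} (hf : ConcaveOn ℝ (Set.Icc 0 1) f)
    (s : Finset ι) (w m : ι → ℝ) (hm : ∀ i ∈ s, 0 ≤ m i) (hmw : ∀ i ∈ s, m i ≤ w i) :
    ∑ i ∈ s, w i * f (m i / w i) ≤ (∑ i ∈ s, w i) * f ((∑ i ∈ s, m i) / ∑ i ∈ s, w i) := by
  have hw : ∀ i ∈ s, 0 ≤ w i := fun i hi => (hm i hi).trans (hmw i hi)
  set W := ∑ i ∈ s, w i
  rcases (show 0 ≤ W from sum_nonneg hw).eq_or_lt with hW | hW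
  · have hw₀ : ∀ i ∈ s, w i = 0 := (sum_eq_zero_iff_of_nonneg hw).1 hW.symm
    rw [← hW, zero_mul]
    exact (sum_eq_zero fun i hi => by rw [hw₀ i hi, zero_mul]).le
  have hjensen := hf.le_map_sum (t := s) (w := fun i => w i / W) (p := fun i => m i / w i)
    (fun i hi => div_nonneg (hw i hi) hW.le) (by rw [← sum_div, div_self hW.ne'])
    (fun i hi => ⟨div_nonneg (hm i hi) (hw i hi), div_le_one_of_le₀ (hmw i hi) (hw i hi)⟩)
  have hmass : ∀ i ∈ s, w i / W * (m i / w i) = m i / W := fun i hi => by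
    rcases (hw i hi).eq_or_lt with h | h
    · have : m i = 0 := le_antisymm (h ▸ hmw i hi) (hm i hi)
      simp [← h, this]
    · field_simp
  simp only [smul_eq_mul, sum_congr rfl hmass, ← sum_div] at hjensen
  simp only [div_mul_eq_mul_div, ← sum_div] at hjensen
  rwa [div_le_iff₀' hW] at hjensen

lemma sum_min_eq_one_sub_tv {α : Type*} [Fintype α] (P Q : α → ℝ)
    (hPsum : ∑ x, P x = 1) (hQsum : ∑ x, Q x = 1) :
    ∑ x, min (P x) (Q x) = 1 - (1 / 2) * ∑ x, |P x - Q x| := by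
  have hmin : ∀ x, min (P x) (Q x) = (P x + Q x - |P x - Q x|) / 2 := fun x => by
    linarith [min_add_max (P x) (Q x), max_sub_min_eq_abs' (P x) (Q x)]
  simp only [hmin, ← sum_div, sum_sub_distrib, sum_add_distrib, hPsum, hQsum]
  ring

theorem capacitory_discrimination_lower_bound {α : Type*} [Fintype α] (P Q : α → ℝ)
    (hP : ∀ x, 0 ≤ P x) (hQ : ∀ x, 0 ≤ Q x)
    (hPsum : ∑ x, P x = 1) (hQsum : ∑ x, Q x = 1)
    (ε : ℝ) (hε : ε = (1 / 2) * ∑ x, |P x - Q x|) :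
    (∑ x, P x * Real.log (P x / ((P x + Q x) / 2))) +
      (∑ x, Q x * Real.log (Q x / ((P x + Q x) / 2)))
    ≥ 2 * (((1 - ε) / 2) * Real.log (((1 - ε) / 2) / (1 / 2)) +
          (1 - (1 - ε) / 2) * Real.log ((1 - (1 - ε) / 2) / (1 - 1 / 2))) := by
  have hmass : ∑ x, (P x + Q x) = 2 := by rw [sum_add_distrib, hPsum, hQsum]; norm_num
  have hperspective := strictConcave_binEntropy.concaveOn.sum_perspective_le univ
    (fun x => P x + Q x) (fun x => min (P x) (Q x)) (fun x _ => le_min (hP x) (hQ x))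
    (fun x _ => min_le_left _ _ |>.trans (le_add_of_nonneg_right (hQ x)))
  rw [hmass, sum_min_eq_one_sub_tv P Q hPsum hQsum, ← hε] at hperspective
  calc 2 * binaryRelEntropy ((1 - ε) / 2) (1 / 2)
      = 2 * log 2 - 2 * binEntropy ((1 - ε) / 2) := by rw [binaryRelEntropy_half]; ring
    _ ≤ 2 * log 2 - ∑ x, (P x + Q x) * binEntropy (min (P x) (Q x) / (P x + Q x)) := by
        linarith
    _ = ∑ x, (P x + Q x) * binaryRelEntropy (P x / (P x + Q x)) (1 / 2) := by
        simp only [binaryRelEntropy_half, binEntropy_div_add_eq_min, mul_sub, sum_sub_distrib,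
          ← sum_mul, hmass]
    _ = _ := by
        rw [← sum_add_distrib]
        exact sum_congr rfl fun x _ => (mul_log_div_midpoint_add _ _).symm
end

section
/- For ε ∈ [0,1], the 2-element distributions P = ((1-ε)/2, (1+ε)/2) and Q = ((1+ε)/2, (1-ε)/2) satisfy C̄(P,Q) = 2·d((1-ε)/2 ‖ 1/2) = (1+ε)log(1+ε) + (1-ε)log(1-ε), so the lower bound on the capacitory discrimination in terms of total variation distance is attained. -/
theorem capacitory_discrimination_attained_general (ε : ℝ) :
    let P : Fin 2 → ℝ := ![(1 - ε) / 2, (1 + ε) / 2]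
    let Q : Fin 2 → ℝ := ![(1 + ε) / 2, (1 - ε) / 2]
    (∑ x, P x * Real.log (P x / ((P x + Q x) / 2))) +
      (∑ x, Q x * Real.log (Q x / ((P x + Q x) / 2)))
    = 2 * (((1 - ε) / 2) * Real.log (((1 - ε) / 2) / (1 / 2)) +
          (1 - (1 - ε) / 2) * Real.log ((1 - (1 - ε) / 2) / (1 - 1 / 2))) ∧
    (∑ x, P x * Real.log (P x / ((P x + Q x) / 2))) +
      (∑ x, Q x * Real.log (Q x / ((P x + Q x) / 2)))
    = (1 + ε) * Real.log (1 + ε) + (1 - ε) * Real.log (1 - ε) := by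
  intro P Q
  have hmid₀ : ((1 - ε) / 2 + (1 + ε) / 2) / 2 = 1 / 2 := by ring
  have hmid₁ : ((1 + ε) / 2 + (1 - ε) / 2) / 2 = 1 / 2 := by ring
  simp only [P, Q, Fin.sum_univ_two, Matrix.cons_val_zero, Matrix.cons_val_one, hmid₀, hmid₁]
  constructor <;> ring_nf

theorem capacitory_discrimination_attained (ε : ℝ) (hε : ε ∈ Set.Icc (0 : ℝ) 1) :
    let P : Fin 2 → ℝ := ![(1 - ε) / 2, (1 + ε) / 2]
    let Q : Fin 2 → ℝ := ![(1 + ε) / 2, (1 - ε) / 2]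
    (∑ x, P x * Real.log (P x / ((P x + Q x) / 2))) +
      (∑ x, Q x * Real.log (Q x / ((P x + Q x) / 2)))
    = 2 * (((1 - ε) / 2) * Real.log (((1 - ε) / 2) / (1 / 2)) +
          (1 - (1 - ε) / 2) * Real.log ((1 - (1 - ε) / 2) / (1 - 1 / 2))) ∧
    (∑ x, P x * Real.log (P x / ((P x + Q x) / 2))) +
      (∑ x, Q x * Real.log (Q x / ((P x + Q x) / 2)))
    = (1 + ε) * Real.log (1 + ε) + (1 - ε) * Real.log (1 - ε) :=
  capacitory_discrimination_attained_general ε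
end

section
/- For any two probability distributions P and Q on a finite set, the concavity deficit of the entropy satisfies H((P+Q)/2) - (H(P)+H(Q))/2 ≥ d((1 - d_TV(P,Q))/2 ‖ 1/2), where H(P) = -Σₓ P(x) log P(x) and d(p‖q) is the binary relative entropy. -/
open Real Set

/-!
With `m = (p + q) / 2` and `t = |p - q| / (p + q)`, the concavity gap of `x log x` at `p, q` is
`m (log 2 - h ((1 - t) / 2))`, `h` the binary entropy (at `p + q = 0` division by zero gives
`t = 0`, harmless since then `m = 0`). Summing, the entropy deficit is
`∑ m (log 2 - h ((1 - t) / 2))`. Since `t ↦ h ((1 - t) / 2)` is concave, the `m` are weights and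
`∑ m t = d_TV(P, Q) = ε`, Jensen's inequality bounds the deficit below by
`log 2 - h ((1 - ε) / 2) = d((1 - ε) / 2 ‖ 1 / 2)`.
-/

lemma concaveOn_binEntropy_one_sub_div_two :
    ConcaveOn ℝ (Icc (-1) 1) fun t => binEntropy ((1 - t) / 2) := by
  refine ⟨convex_Icc _ _, fun x hx y hy a b ha hb hab => ?_⟩
  have hmem : ∀ t ∈ Icc (-1 : ℝ) 1, (1 - t) / 2 ∈ Icc (0 : ℝ) 1 := fun t ht =>
    ⟨by linarith [ht.2], by linarith [ht.1]⟩
  convert strictConcave_binEntropy.concaveOn.2 (hmem x hx) (hmem y hy) ha hb hab using 2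
  simp only [smul_eq_mul]
  linear_combination (-1 / 2 : ℝ) * hab

lemma mul_log_div (x : ℝ) {y : ℝ} (hy : y ≠ 0) : x * log (x / y) = x * log x - x * log y := by
  rcases eq_or_ne x 0 with rfl | hx
  · simp
  · rw [log_div hx hy]; ring

lemma binaryKL_half_eq (p : ℝ) :
    p * log (p / (1 / 2)) + (1 - p) * log ((1 - p) / (1 - 1 / 2)) = log 2 - binEntropy p := by
  rw [show (1 : ℝ) - 1 / 2 = 1 / 2 by norm_num, mul_log_div _ (by norm_num),
    mul_log_div _ (by norm_num), binEntropy_eq_negMulLog_add_negMulLog_one_sub, negMulLog,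
    negMulLog, one_div, log_inv]
  ring

lemma binEntropy_one_sub_abs_sub_div_add_div_two (p q : ℝ) (h : p + q ≠ 0) :
    binEntropy ((1 - |p - q| / (p + q)) / 2) = binEntropy (p / (p + q)) := by
  rcases abs_cases (p - q) with ⟨habs, _⟩ | ⟨habs, _⟩
  · rw [habs, ← binEntropy_one_sub (p / (p + q))]
    congr 1; field_simp; ring
  · rw [habs]; congr 1; field_simp; ring

lemma mul_binEntropy_div_add (p q : ℝ) (h : p + q ≠ 0) :
    (p + q) * binEntropy (p / (p + q)) = (p + q) * log (p + q) - p * log p - q * log q := by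
  have hq : 1 - p / (p + q) = q / (p + q) := by field_simp; ring
  have hx : ∀ x, x / (p + q) * log (x / (p + q)) = (x * log x - x * log (p + q)) / (p + q) :=
    fun x => by rw [div_mul_eq_mul_div, mul_log_div _ h]
  rw [binEntropy_eq_negMulLog_add_negMulLog_one_sub, hq, negMulLog, negMulLog, neg_mul, neg_mul,
    hx, hx]
  field_simp
  ring

lemma mul_log_concavity_gap_eq (p q : ℝ) (hp : 0 ≤ p) (hq : 0 ≤ q) :
    (p * log p + q * log q) / 2 - (p + q) / 2 * log ((p + q) / 2) =
      (p + q) / 2 * (log 2 - binEntropy ((1 - |p - q| / (p + q)) / 2)) := by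
  rcases eq_or_ne (p + q) 0 with h | h
  · obtain ⟨rfl, rfl⟩ : p = 0 ∧ q = 0 := ⟨by linarith, by linarith⟩
    simp
  have key := mul_binEntropy_div_add p q h
  rw [binEntropy_one_sub_abs_sub_div_add_div_two p q h, log_div h two_ne_zero]
  linear_combination (1 / 2 : ℝ) * key

lemma abs_sub_div_add_mem_Icc {p q : ℝ} (hp : 0 ≤ p) (hq : 0 ≤ q) :
    |p - q| / (p + q) ∈ Icc (-1 : ℝ) 1 := by
  refine ⟨by linarith [div_nonneg (abs_nonneg (p - q)) (add_nonneg hp hq)], ?_⟩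
  exact div_le_one_of_le₀ (abs_sub_le_iff.2 ⟨by linarith, by linarith⟩) (add_nonneg hp hq)

lemma add_div_two_mul_abs_sub_div_add {p q : ℝ} (hp : 0 ≤ p) (hq : 0 ≤ q) :
    (p + q) / 2 * (|p - q| / (p + q)) = 1 / 2 * |p - q| := by
  rcases eq_or_ne (p + q) 0 with h | h
  · obtain ⟨rfl, rfl⟩ : p = 0 ∧ q = 0 := ⟨by linarith, by linarith⟩
    simp
  · field_simp

theorem entropy_concavity_deficit_lower_bound {α : Type*} [Fintype α] (P Q : α → ℝ)
    (hP : ∀ x, 0 ≤ P x) (hQ : ∀ x, 0 ≤ Q x)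
    (hPsum : ∑ x, P x = 1) (hQsum : ∑ x, Q x = 1)
    (ε : ℝ) (hε : ε = (1 / 2) * ∑ x, |P x - Q x|) :
    (-∑ x, ((P x + Q x) / 2) * Real.log ((P x + Q x) / 2)) -
      ((-∑ x, P x * Real.log (P x)) + (-∑ x, Q x * Real.log (Q x))) / 2
    ≥ ((1 - ε) / 2) * Real.log (((1 - ε) / 2) / (1 / 2)) +
        (1 - (1 - ε) / 2) * Real.log ((1 - (1 - ε) / 2) / (1 - 1 / 2)) := by
  have hm_sum : ∑ x, (P x + Q x) / 2 = 1 := by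
    rw [← Finset.sum_div, Finset.sum_add_distrib, hPsum, hQsum]; norm_num
  have hmt : ∑ x, (P x + Q x) / 2 * (|P x - Q x| / (P x + Q x)) = ε := by
    rw [hε, Finset.mul_sum]
    exact Finset.sum_congr rfl fun x _ => add_div_two_mul_abs_sub_div_add (hP x) (hQ x)
  have hjensen := concaveOn_binEntropy_one_sub_div_two.le_map_sum
    (fun x _ => by linarith [hP x, hQ x]) hm_sum
    (fun x _ => abs_sub_div_add_mem_Icc (hP x) (hQ x))
  simp only [smul_eq_mul, hmt] at hjensen
  have hdeficit : ∑ x, (P x + Q x) / 2 * (log 2 - binEntropy ((1 - |P x - Q x| / (P x + Q x)) / 2))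
      = (-∑ x, (P x + Q x) / 2 * log ((P x + Q x) / 2)) -
        ((-∑ x, P x * log (P x)) + (-∑ x, Q x * log (Q x))) / 2 := by
    rw [Finset.sum_congr rfl fun x _ => (mul_log_concavity_gap_eq _ _ (hP x) (hQ x)).symm,
      Finset.sum_sub_distrib, ← Finset.sum_div, Finset.sum_add_distrib]
    ring
  rw [binaryKL_half_eq, ge_iff_le, ← hdeficit, Finset.sum_congr rfl fun x _ => mul_sub _ _ _, Finset.sum_sub_distrib, ← Finset.sum_mul,
    hm_sum, one_mul]
  linarith
end

section
/- For ε ∈ [0,1), the 2-element distributions P = ((1-ε)/2, (1+ε)/2) and Q = ((1+ε)/2, (1-ε)/2) satisfy J(P,Q) = ε·log((1+ε)/(1-ε)), so the lower bound on Jeffreys' divergence in terms of the total variation distance is attained. -/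
open Real

theorem sum_mul_log_div_add_sum_mul_log_div {ι : Type*} [Fintype ι] (p q : ι → ℝ) :
    ∑ x, p x * log (p x / q x) + ∑ x, q x * log (q x / p x)
      = ∑ x, (p x - q x) * log (p x / q x) := by
  rw [← Finset.sum_add_distrib]
  refine Finset.sum_congr rfl fun x _ => ?_
  rw [← inv_div, log_inv]
  ring

theorem jeffreys_divergence_attained_general (ε : ℝ) :
    let P : Fin 2 → ℝ := ![(1 - ε) / 2, (1 + ε) / 2]
    let Q : Fin 2 → ℝ := ![(1 + ε) / 2, (1 - ε) / 2]
    ((∑ x, P x * Real.log (P x / Q x)) + (∑ x, Q x * Real.log (Q x / P x))) / 2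
      = ε * Real.log ((1 + ε) / (1 - ε)) := by
  intro P Q
  have hPQ : ∀ a b : ℝ, (a / 2) / (b / 2) = a / b := fun a b =>
    div_div_div_cancel_right₀ two_ne_zero a b
  rw [sum_mul_log_div_add_sum_mul_log_div, Fin.sum_univ_two]
  simp only [P, Q, Matrix.cons_val_zero, Matrix.cons_val_one, hPQ]
  rw [← inv_div (1 + ε), log_inv]
  ring

theorem jeffreys_divergence_attained (ε : ℝ) (hε : ε ∈ Set.Ico (0 : ℝ) 1) :
    let P : Fin 2 → ℝ := ![(1 - ε) / 2, (1 + ε) / 2]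
    let Q : Fin 2 → ℝ := ![(1 + ε) / 2, (1 - ε) / 2]
    ((∑ x, P x * Real.log (P x / Q x)) + (∑ x, Q x * Real.log (Q x / P x))) / 2
      = ε * Real.log ((1 + ε) / (1 - ε)) :=
  jeffreys_divergence_attained_general ε
end

section
/- Let f: (0,∞) → ℝ be convex with f(1)=0, differentiable at 1, and satisfying f(u) = u·f(1/u) + 2f'(1)(u-1) for all u > 0 (symmetry condition). Then for any probability distributions P, Q on a finite set with full support and d_TV(P,Q) = ε < 1, the f-divergence satisfies D_f(P‖Q) ≥ (1-ε)·f((1+ε)/(1-ε)) - 2f'(1)·ε. -/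
/-!
Shifting `f` to `g u = f u - a (u - 1)` changes neither side of the inequality, and turns the
symmetry condition into `g u = u g (1/u)`, i.e. the perspective `(w, p) ↦ w g (p / w)` of `g` is
symmetric in `w` and `p`. So each term `Q g (P / Q)` of the divergence equals the perspective at
`(min P Q, max P Q)`, and Jensen's inequality bounds the sum of these by the perspective at
`(∑ min P Q, ∑ max P Q) = (1 - ε, 1 + ε)`.
-/

open Finset Set

noncomputable def perspective (g : ℝ → ℝ) (w p : ℝ) : ℝ := w * g (p / w)

theorem perspective_comm {g : ℝ → ℝ} (hg : ∀ u, 0 < u → g u = u * g (1 / u))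
    {w p : ℝ} (hw : 0 < w) (hp : 0 < p) : perspective g w p = perspective g p w := by
  rw [perspective, perspective, hg _ (div_pos hp hw), one_div_div]
  field_simp

theorem perspective_eq_min_max {g : ℝ → ℝ} (hg : ∀ u, 0 < u → g u = u * g (1 / u))
    {w p : ℝ} (hw : 0 < w) (hp : 0 < p) :
    perspective g w p = perspective g (min w p) (max w p) := by
  rcases le_total w p with h | h
  · rw [min_eq_left h, max_eq_right h]
  · rw [min_eq_right h, max_eq_left h, perspective_comm hg hw hp]

theorem perspective_sub_affine (f : ℝ → ℝ) (a : ℝ) {w : ℝ} (hw : w ≠ 0) (p : ℝ) :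
    perspective (fun u => f u - a * (u - 1)) w p = perspective f w p - a * (p - w) := by
  simp only [perspective]
  field_simp

theorem ConvexOn.sub_affine {s : Set ℝ} {f : ℝ → ℝ} (hf : ConvexOn ℝ s f) (a : ℝ) :
    ConvexOn ℝ s (fun u => f u - a * (u - 1)) :=
  hf.sub <| (((LinearMap.mulLeft ℝ a).concaveOn hf.1).add_const (-a)).congr fun u _ => by
    simp only [Pi.add_apply, LinearMap.mulLeft_apply]
    ring

theorem ConvexOn.perspective_sum_le {ι : Type*} {g : ℝ → ℝ} (hg : ConvexOn ℝ (Ioi 0) g)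
    {s : Finset ι} {w p : ι → ℝ} (hw : ∀ i ∈ s, 0 < w i) (hp : ∀ i ∈ s, 0 < p i) :
    perspective g (∑ i ∈ s, w i) (∑ i ∈ s, p i) ≤ ∑ i ∈ s, perspective g (w i) (p i) := by
  rcases s.eq_empty_or_nonempty with rfl | hs
  · simp [perspective]
  have hW : 0 < ∑ i ∈ s, w i := sum_pos hw hs
  have hJensen := hg.map_sum_le (t := s) (w := fun i => w i / ∑ j ∈ s, w j)
    (p := fun i => p i / w i) (fun i hi => (div_pos (hw i hi) hW).le)
    (by rw [← sum_div, div_self hW.ne']) (fun i hi => div_pos (hp i hi) (hw i hi))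
  have hmean : ∑ i ∈ s, (w i / ∑ j ∈ s, w j) • (p i / w i) = (∑ i ∈ s, p i) / ∑ i ∈ s, w i := by
    rw [sum_div]
    refine sum_congr rfl fun i hi => ?_
    rw [smul_eq_mul]
    field_simp [(hw i hi).ne']
  rw [hmean] at hJensen
  simp only [smul_eq_mul, div_mul_eq_mul_div, ← sum_div] at hJensen
  rw [perspective, mul_comm]
  exact (le_div_iff₀ hW).mp hJensen

theorem sum_min_eq_sub_abs {ι : Type*} (s : Finset ι) (P Q : ι → ℝ) :
    ∑ i ∈ s, min (P i) (Q i) = (∑ i ∈ s, P i + ∑ i ∈ s, Q i - ∑ i ∈ s, |P i - Q i|) / 2 := by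
  rw [← sum_add_distrib, ← sum_sub_distrib, sum_div]
  refine sum_congr rfl fun i _ => ?_
  rw [← min_add_max (P i) (Q i), abs_sub_comm, ← max_sub_min_eq_abs]
  ring

theorem sum_max_eq_add_abs {ι : Type*} (s : Finset ι) (P Q : ι → ℝ) :
    ∑ i ∈ s, max (P i) (Q i) = (∑ i ∈ s, P i + ∑ i ∈ s, Q i + ∑ i ∈ s, |P i - Q i|) / 2 := by
  rw [← sum_add_distrib, ← sum_add_distrib, sum_div]
  refine sum_congr rfl fun i _ => ?_
  rw [← min_add_max (P i) (Q i), abs_sub_comm, ← max_sub_min_eq_abs]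
  ring

theorem symmetric_f_divergence_lower_bound_general {α : Type*} [Fintype α] (P Q : α → ℝ)
    (hP : ∀ x, 0 < P x) (hQ : ∀ x, 0 < Q x)
    (hPsum : ∑ x, P x = 1) (hQsum : ∑ x, Q x = 1)
    (f : ℝ → ℝ) (a : ℝ)
    (hconv : ConvexOn ℝ (Set.Ioi 0) f)
    (hsym : ∀ u : ℝ, 0 < u → f u = u * f (1 / u) + 2 * a * (u - 1))
    (ε : ℝ) (hε : ε = (1 / 2) * ∑ x, |P x - Q x|) :
    ∑ x, Q x * f (P x / Q x) ≥ (1 - ε) * f ((1 + ε) / (1 - ε)) - 2 * a * ε := by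
  set g : ℝ → ℝ := fun u => f u - a * (u - 1)
  have hg_symm : ∀ u, 0 < u → g u = u * g (1 / u) := by
    intro u hu
    simp only [g, hsym u hu]
    field_simp
    ring
  have hmin : ∑ x, min (Q x) (P x) = 1 - ε := by
    simp_rw [sum_min_eq_sub_abs, hPsum, hQsum, hε, abs_sub_comm (Q _)]
    ring
  have hmax : ∑ x, max (Q x) (P x) = 1 + ε := by
    simp_rw [sum_max_eq_add_abs, hPsum, hQsum, hε, abs_sub_comm (Q _)]
    ring
  have hε1 : 1 - ε ≠ 0 := by
    rw [← hmin]
    exact (sum_pos (fun x _ => lt_min (hQ x) (hP x))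
      (nonempty_of_sum_ne_zero (hPsum ▸ one_ne_zero))).ne'
  have key : perspective g (1 - ε) (1 + ε) ≤ ∑ x, perspective g (Q x) (P x) := by
    simp_rw [← hmin, ← hmax, perspective_eq_min_max hg_symm (hQ _) (hP _)]
    exact (hconv.sub_affine a).perspective_sum_le (fun x _ => lt_min (hQ x) (hP x))
      (fun x _ => lt_max_of_lt_left (hQ x))
  have hD : ∑ x, perspective g (Q x) (P x) = ∑ x, Q x * f (P x / Q x) := by
    simp only [g, perspective_sub_affine f a (hQ _).ne', sum_sub_distrib, ← mul_sum, hPsum, hQsum]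
    simp [perspective]
  have hbound : perspective g (1 - ε) (1 + ε) = (1 - ε) * f ((1 + ε) / (1 - ε)) - 2 * a * ε := by
    rw [perspective_sub_affine f a hε1, perspective]
    ring
  rw [← hD, ← hbound]
  exact key

theorem symmetric_f_divergence_lower_bound {α : Type*} [Fintype α] (P Q : α → ℝ)
    (hP : ∀ x, 0 < P x) (hQ : ∀ x, 0 < Q x)
    (hPsum : ∑ x, P x = 1) (hQsum : ∑ x, Q x = 1)
    (f : ℝ → ℝ) (a : ℝ)
    (hconv : ConvexOn ℝ (Set.Ioi 0) f) (hf1 : f 1 = 0)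
    (hderiv : HasDerivAt f a 1)
    (hsym : ∀ u : ℝ, 0 < u → f u = u * f (1 / u) + 2 * a * (u - 1))
    (ε : ℝ) (hε : ε = (1 / 2) * ∑ x, |P x - Q x|) (hε1 : ε < 1) :
    ∑ x, Q x * f (P x / Q x) ≥ (1 - ε) * f ((1 + ε) / (1 - ε)) - 2 * a * ε :=
  symmetric_f_divergence_lower_bound_general P Q hP hQ hPsum hQsum f a hconv hsym ε hε
end

section
/- With the setup of the source coding bound, define δ(u) = l(u) + log_d P(u). Then D(Q‖P) = -log c - (log d / c)·Σ_u P(u)·δ(u)·d^{-δ(u)}, and consequently the Jeffreys divergence satisfies J(P,Q) = (1/2)[Δ·log d - (log d / c)·Σ_u P(u)·δ(u)·d^{-δ(u)}]. If moreover δ(u) ≥ 0 for all u (i.e., l(u) ≥ -log_d P(u)), then J(P,Q) ≤ (Δ·log d)/2. -/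
/-!
Since `P u * d ^ (-δ u) = d ^ (-l u)`, the code distribution is `Q u = P u * d ^ (-δ u) / c`,
and the log-likelihood ratio `log (P u / Q u) = δ u * log d + log c` is affine in `δ u`.
Averaging it against `P` gives `D(P‖Q) = Δ log d + log c`; averaging its negative against `Q`
gives the stated formula for `D(Q‖P)`, whose `δ`-term is nonnegative when all `δ u ≥ 0`.
-/

open Real Finset

namespace SourceCoding

lemma sum_mul_affine {U : Type*} [Fintype U] {w : U → ℝ} (hw : ∑ u, w u = 1) (f : U → ℝ)
    (a b : ℝ) : ∑ u, w u * (a * f u + b) = a * ∑ u, w u * f u + b := by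
  simp only [mul_add, sum_add_distrib, ← sum_mul, hw, one_mul, mul_sum, mul_left_comm]

variable {b p : ℝ}

lemma mul_rpow_neg_add_logb (hb : 0 < b) (hb1 : b ≠ 1) (hp : 0 < p) (n : ℕ) :
    p * b ^ (-(n + logb b p)) = (b ^ n)⁻¹ := by
  rw [rpow_neg hb.le, rpow_add hb, rpow_logb hb hb1 hp, rpow_natCast]
  field_simp

lemma log_div_inv_pow_div (hb : 0 < b) (hb1 : b ≠ 1) (hp : 0 < p) {c : ℝ} (hc : 0 < c)
    (n : ℕ) : log (p / ((b ^ n)⁻¹ / c)) = log b * (n + logb b p) + log c := by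
  have hlogb : log b ≠ 0 := log_ne_zero_of_pos_of_ne_one hb hb1
  rw [log_div hp.ne' (by positivity), log_div (by positivity) hc.ne', log_inv, log_pow, logb]
  field_simp
  ring

end SourceCoding

open SourceCoding

theorem source_coding_jeffreys_bound_general {U : Type*} [Fintype U]
    (P : U → ℝ) (hP : ∀ u, 0 < P u) (hPsum : ∑ u, P u = 1)
    (d : ℕ) (hd : 2 ≤ d) (l : U → ℕ)
    (c : ℝ) (hc : c = ∑ u, ((d : ℝ) ^ l u)⁻¹)
    (Q : U → ℝ) (hQ : ∀ u, Q u = ((d : ℝ) ^ l u)⁻¹ / c)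
    (δ : U → ℝ) (hδ : ∀ u, δ u = l u + Real.log (P u) / Real.log d)
    (Δ : ℝ) (hΔ : Δ = (∑ u, P u * l u) + (∑ u, P u * Real.log (P u)) / Real.log d) :
    (∑ u, Q u * Real.log (Q u / P u))
      = -Real.log c - (Real.log d / c) * ∑ u, P u * δ u * (d : ℝ) ^ (-δ u) ∧
    ((∑ u, P u * Real.log (P u / Q u)) + (∑ u, Q u * Real.log (Q u / P u))) / 2
      = (1 / 2) * (Δ * Real.log d
          - (Real.log d / c) * ∑ u, P u * δ u * (d : ℝ) ^ (-δ u)) ∧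
    ((∀ u, 0 ≤ δ u) →
      ((∑ u, P u * Real.log (P u / Q u)) + (∑ u, Q u * Real.log (Q u / P u))) / 2
        ≤ Δ * Real.log d / 2) := by
  simp only [log_div_log] at hδ
  have hd1 : (1 : ℝ) < d := by exact_mod_cast hd
  have hd0 : (0 : ℝ) < d := one_pos.trans hd1
  have hc0 : 0 < c := hc ▸ sum_pos (fun u _ => by positivity)
    (nonempty_of_sum_ne_zero (hPsum ▸ one_ne_zero))
  have hQsum : ∑ u, Q u = 1 := by simp only [hQ, ← sum_div, ← hc, div_self hc0.ne']
  have hlogPQ (u : U) : log (P u / Q u) = log d * δ u + log c := by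
    rw [hQ, hδ]; exact log_div_inv_pow_div hd0 hd1.ne' (hP u) hc0 (l u)
  have hlogQP (u : U) : log (Q u / P u) = -log d * δ u + -log c := by
    rw [← inv_div, log_inv, hlogPQ]; ring
  have hQδ : ∑ u, Q u * δ u = (∑ u, P u * δ u * (d : ℝ) ^ (-δ u)) / c := by
    rw [sum_div]
    refine sum_congr rfl fun u _ => ?_
    rw [hQ, ← mul_rpow_neg_add_logb hd0 hd1.ne' (hP u), ← hδ]; ring
  have hΔδ : Δ = ∑ u, P u * δ u := by
    rw [hΔ, sum_div, ← sum_add_distrib]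
    exact sum_congr rfl fun u _ => by rw [hδ, logb]; ring
  have hDPQ : ∑ u, P u * log (P u / Q u) = Δ * log d + log c := by
    simp only [hlogPQ, sum_mul_affine hPsum, hΔδ]; ring
  have hDQP : ∑ u, Q u * log (Q u / P u)
      = -log c - (log d / c) * ∑ u, P u * δ u * (d : ℝ) ^ (-δ u) := by
    simp only [hlogQP, sum_mul_affine hQsum, hQδ]; ring
  refine ⟨hDQP, by rw [hDPQ, hDQP]; ring, fun hδ0 => ?_⟩
  have hS : 0 ≤ (log d / c) * ∑ u, P u * δ u * (d : ℝ) ^ (-δ u) :=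
    mul_nonneg (div_nonneg (log_pos hd1).le hc0.le) <| sum_nonneg fun u _ =>
      mul_nonneg (mul_nonneg (hP u).le (hδ0 u)) (rpow_nonneg hd0.le _)
  rw [hDPQ, hDQP]; linarith

theorem source_coding_jeffreys_bound {U : Type*} [Fintype U] [Nonempty U]
    (P : U → ℝ) (hP : ∀ u, 0 < P u) (hPsum : ∑ u, P u = 1)
    (d : ℕ) (hd : 2 ≤ d) (l : U → ℕ)
    (c : ℝ) (hc : c = ∑ u, ((d : ℝ) ^ l u)⁻¹)
    (Q : U → ℝ) (hQ : ∀ u, Q u = ((d : ℝ) ^ l u)⁻¹ / c)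
    (δ : U → ℝ) (hδ : ∀ u, δ u = l u + Real.log (P u) / Real.log d)
    (Δ : ℝ) (hΔ : Δ = (∑ u, P u * l u) + (∑ u, P u * Real.log (P u)) / Real.log d) :
    (∑ u, Q u * Real.log (Q u / P u))
      = -Real.log c - (Real.log d / c) * ∑ u, P u * δ u * (d : ℝ) ^ (-δ u) ∧
    ((∑ u, P u * Real.log (P u / Q u)) + (∑ u, Q u * Real.log (Q u / P u))) / 2
      = (1 / 2) * (Δ * Real.log d
          - (Real.log d / c) * ∑ u, P u * δ u * (d : ℝ) ^ (-δ u)) ∧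
    ((∀ u, 0 ≤ δ u) →
      ((∑ u, P u * Real.log (P u / Q u)) + (∑ u, Q u * Real.log (Q u / P u))) / 2
        ≤ Δ * Real.log d / 2) :=
  source_coding_jeffreys_bound_general P hP hPsum d hd l c hc Q hQ δ hδ Δ hΔ
end
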